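/- Let q = 2 (so K has exactly 4 elements) and n = 3. Then the graph G(V) has exactly 4 connected components. -/

import Mathlib

/-!
Over `𝔽₄` with `τ x = x ^ 2`, the norm `x ^ 3` is `1` on every nonzero `x`, so `Ψ(v, v)` is the
parity of the number of nonzero coordinates of `v ∈ 𝔽₄³`. The vertices of `G(V)` are therefore
the three coordinate lines and the nine lines spanned by vectors without zero coordinates.
Since `c ^ 3 = 1` for `c ∈ 𝔽₄ˣ`, the product `v 0 * v 1 * v 2` depends only on the line, and two
distinct vertices turn out to be adjacent exactly when these products agree. So `G(V)` is a
disjoint union of cliques indexed by the value of this product, which takes all four values in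
`𝔽₄`.
-/

namespace FramePaper

variable {K : Type*} [Field K]

/-- The standard Hermitian form `Ψ(v,w) = ∑ i, v i * τ (w i)` on `Fin n → K`. -/
def Psi (τ : K → K) {n : ℕ} (v w : Fin n → K) : K :=
  ∑ i, v i * τ (w i)

lemma Psi_add_left (τ : K → K) {n : ℕ} (a b w : Fin n → K) :
    Psi τ (a + b) w = Psi τ a w + Psi τ b w := by
  simp [Psi, add_mul, Finset.sum_add_distrib]

lemma Psi_smul_left (τ : K → K) {n : ℕ} (c : K) (a w : Fin n → K) :
    Psi τ (c • a) w = c * Psi τ a w := by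
  simp [Psi, Finset.mul_sum, mul_assoc]

/-- The orthogonal complement `S^⊥ = {v | ∀ s ∈ S, Ψ(v,s) = 0}`. -/
def perp (τ : K → K) {n : ℕ} (S : Submodule K (Fin n → K)) :
    Submodule K (Fin n → K) where
  carrier := {v | ∀ s ∈ S, Psi τ v s = 0}
  add_mem' := by
    intro a b ha hb
    show ∀ s ∈ S, Psi τ (a + b) s = 0
    intro s hs
    rw [Psi_add_left, ha s hs, hb s hs, add_zero]
  zero_mem' := by
    show ∀ s ∈ S, Psi τ 0 s = 0
    intro s hs
    simp [Psi]
  smul_mem' := by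
    intro c a ha
    show ∀ s ∈ S, Psi τ (c • a) s = 0
    intro s hs
    rw [Psi_smul_left, ha s hs, mul_zero]

/-- A subspace `S` is non-degenerate iff `S ⊓ S^⊥ = ⊥`. -/
def Nondeg (τ : K → K) {n : ℕ} (S : Submodule K (Fin n → K)) : Prop :=
  S ⊓ perp τ S = ⊥

/-- Vertices of `G(V)`: the `1`-dimensional non-degenerate subspaces. -/
def IsVertex (τ : K → K) {n : ℕ} (S : Submodule K (Fin n → K)) : Prop :=
  Module.finrank K S = 1 ∧ Nondeg τ S

/-- The graph `G(V)` on the `1`-dimensional non-degenerate subspaces of `V = Fin n → K`,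
with `S, W` adjacent iff `S ≠ W` and `Ψ(s,w) = 0` for all `s ∈ S`, `w ∈ W`. -/
def FrameGraph (τ : K →+* K) (hτ2 : ∀ x, τ (τ x) = x) (n : ℕ) :
    SimpleGraph {S : Submodule K (Fin n → K) // IsVertex (⇑τ) S} where
  Adj S W := S ≠ W ∧ ∀ s ∈ S.1, ∀ w ∈ W.1, Psi (⇑τ) s w = 0
  symm := ⟨by
    rintro S W ⟨hne, h⟩
    refine ⟨hne.symm, fun w hw s hs => ?_⟩
    have key : Psi (⇑τ) w s = τ (Psi (⇑τ) s w) := by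
      simp only [Psi, map_sum, map_mul, hτ2]
      exact Finset.sum_congr rfl fun i _ => mul_comm _ _
    rw [key, h s hs w hw, map_zero]⟩
  loopless := ⟨fun S h => h.1 rfl⟩

/-- On a finite field with `q ^ 2` elements, `x ↦ x ^ q` is an involution. -/
lemma tau_invol [Fintype K] {q : ℕ} (hK : Fintype.card K = q ^ 2)
    (τ : K →+* K) (hτq : ∀ x, τ x = x ^ q) : ∀ x, τ (τ x) = x := fun x => by
  rw [hτq, hτq, ← pow_mul, ← pow_two, ← hK, FiniteField.pow_card]

noncomputable instance instFintypeVertex [Fintype K] {n : ℕ} (τ : K → K) :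
    Fintype {S : Submodule K (Fin n → K) // IsVertex τ S} := by
  have : Finite (Submodule K (Fin n → K)) :=
    Finite.of_injective (fun S => (S : Set (Fin n → K))) SetLike.coe_injective
  exact Fintype.ofFinite _

/-- The integer `d_m = q^{m-2} (q^{m-1} - (-1)^{m-1}) / (q+1)` (the division is exact). -/
def dZ (q m : ℕ) : ℤ :=
  ((q : ℤ) ^ (m - 2) * ((q : ℤ) ^ (m - 1) - (-1) ^ (m - 1))) / ((q : ℤ) + 1)

theorem _root_.SimpleGraph.natCard_connectedComponent_eq_of_adj_iff {V β : Type*}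
    (G : SimpleGraph V) (L : V → β) (hL : Function.Surjective L)
    (hadj : ∀ v w, G.Adj v w ↔ v ≠ w ∧ L v = L w) :
    Nat.card G.ConnectedComponent = Nat.card β := by
  have hreach : ∀ v w, G.Reachable v w ↔ L v = L w := by
    refine fun v w => ⟨fun h => ?_, fun h => ?_⟩
    · rw [SimpleGraph.reachable_iff_reflTransGen] at h
      induction h with
      | refl => rfl
      | tail _ hadj' ih => exact ih.trans ((hadj _ _).mp hadj').2
    · by_cases hvw : v = w
      · exact hvw ▸ SimpleGraph.Reachable.refl v
      · exact ((hadj v w).mpr ⟨hvw, h⟩).reachable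
  exact Nat.card_congr ((Quot.congrRight hreach).trans (Setoid.quotientKerEquivOfSurjective L hL))

section Hermitian

variable (τ : K →+* K) {n : ℕ}

lemma Psi_smul_right (c : K) (v w : Fin n → K) : Psi τ v (c • w) = τ c * Psi τ v w := by
  simp only [Psi, Pi.smul_apply, smul_eq_mul, map_mul, Finset.mul_sum]
  exact Finset.sum_congr rfl fun i _ => by ring

lemma Psi_single_left (i : Fin n) (a : K) (w : Fin n → K) :
    Psi τ (Pi.single i a) w = a * τ (w i) := by
  simp [Psi, Pi.single_apply]

lemma Psi_single_right (v : Fin n → K) (j : Fin n) (b : K) :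
    Psi τ v (Pi.single j b) = v j * τ b := by
  simp [Psi, Pi.single_apply, apply_ite τ]

lemma isVertex_span_singleton {v : Fin n → K} (hv : Psi τ v v ≠ 0) :
    IsVertex τ (K ∙ v) := by
  have hv0 : v ≠ 0 := by rintro rfl; simp [Psi] at hv
  refine ⟨finrank_span_singleton hv0, eq_bot_iff.mpr fun x hx => ?_⟩
  obtain ⟨hxv, hperp⟩ := Submodule.mem_inf.mp hx
  obtain ⟨c, rfl⟩ := Submodule.mem_span_singleton.mp hxv
  have hc : c * Psi τ v v = 0 := by
    rw [← Psi_smul_left]; exact hperp v (Submodule.mem_span_singleton_self v)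
  simp [(mul_eq_zero.mp hc).resolve_right hv]

lemma IsVertex.exists_eq_span_singleton {S : Submodule K (Fin n → K)} (hS : IsVertex τ S) :
    ∃ v, S = K ∙ v ∧ Psi τ v v ≠ 0 := by
  obtain ⟨⟨v, hvS⟩, hv0, hspan⟩ := finrank_eq_one_iff'.mp hS.1
  have hS_eq : S = K ∙ v := by
    refine le_antisymm (fun x hx => ?_) ((Submodule.span_singleton_le_iff_mem _ _).mpr hvS)
    obtain ⟨c, hc⟩ := hspan ⟨x, hx⟩
    exact Submodule.mem_span_singleton.mpr ⟨c, congrArg Subtype.val hc⟩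
  refine ⟨v, hS_eq, fun hvv => hv0 ?_⟩
  have hv_perp : v ∈ S ⊓ perp τ S := by
    refine Submodule.mem_inf.mpr ⟨hvS, fun s hs => ?_⟩
    obtain ⟨c, rfl⟩ := Submodule.mem_span_singleton.mp (hS_eq ▸ hs)
    rw [Psi_smul_right, hvv, mul_zero]
  rw [hS.2, Submodule.mem_bot] at hv_perp
  exact Subtype.ext hv_perp

noncomputable def vertexGen (S : {S : Submodule K (Fin n → K) // IsVertex τ S}) : Fin n → K :=
  (S.2.exists_eq_span_singleton τ).choose

lemma span_vertexGen (S : {S : Submodule K (Fin n → K) // IsVertex τ S}) :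
    K ∙ vertexGen τ S = S.1 :=
  (S.2.exists_eq_span_singleton τ).choose_spec.1.symm

lemma Psi_vertexGen_self_ne_zero (S : {S : Submodule K (Fin n → K) // IsVertex τ S}) :
    Psi τ (vertexGen τ S) (vertexGen τ S) ≠ 0 :=
  (S.2.exists_eq_span_singleton τ).choose_spec.2

lemma frameGraph_adj_iff (hτ2 : ∀ x, τ (τ x) = x)
    (S T : {S : Submodule K (Fin n → K) // IsVertex τ S}) :
    (FrameGraph τ hτ2 n).Adj S T ↔ S ≠ T ∧ Psi τ (vertexGen τ S) (vertexGen τ T) = 0 := by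
  refine and_congr_right fun _ => ⟨fun h => h _ ?_ _ ?_, fun h s hs w hw => ?_⟩
  · rw [← span_vertexGen τ S]; exact Submodule.mem_span_singleton_self _
  · rw [← span_vertexGen τ T]; exact Submodule.mem_span_singleton_self _
  rw [← span_vertexGen τ S] at hs
  rw [← span_vertexGen τ T] at hw
  obtain ⟨c, rfl⟩ := Submodule.mem_span_singleton.mp hs
  obtain ⟨d, rfl⟩ := Submodule.mem_span_singleton.mp hw
  rw [Psi_smul_left, Psi_smul_right, h, mul_zero, mul_zero]

lemma Psi_self_eq_sum_pow {q : ℕ} (hτ : ∀ x, τ x = x ^ q) (v : Fin n → K) :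
    Psi τ v v = ∑ i, v i ^ (q + 1) := by
  simp only [Psi, hτ, pow_succ']

end Hermitian

section FourElementField

variable [Fintype K] (τ : K →+* K)

lemma two_eq_zero_of_card_eq_four (hK : Fintype.card K = 4) : (2 : K) = 0 := by
  have h4 : ((4 : ℕ) : K) = 0 := hK ▸ FiniteField.cast_card_eq_zero K
  have h22 : (2 : K) * 2 = 0 := by norm_num at h4 ⊢; exact h4
  exact mul_self_eq_zero.mp h22

lemma pow_three_eq_one_of_card_eq_four (hK : Fintype.card K = 4) {x : K} (hx : x ≠ 0) :
    x ^ 3 = 1 := by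
  simpa [hK] using FiniteField.pow_card_sub_one_eq_one x hx

/-- Both sides say that `x, y, z` are the three distinct elements of `𝔽₄ˣ`. -/
lemma add_add_eq_zero_iff_mul_mul_eq_one (hK : Fintype.card K = 4) {x y z : K}
    (hx : x ≠ 0) (hy : y ≠ 0) (hz : z ≠ 0) (hxyz : ¬ (y = x ∧ z = x)) :
    x + y + z = 0 ↔ x * y * z = 1 := by
  have h2 := two_eq_zero_of_card_eq_four hK
  have hx3 := pow_three_eq_one_of_card_eq_four hK hx
  have hy3 := pow_three_eq_one_of_card_eq_four hK hy
  -- `x ^ 3 = y ^ 3` with `x ≠ y` forces `x ^ 2 + x * y + y ^ 2 = 0`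
  have key : y ≠ x → x ^ 2 * y + x * y ^ 2 = 1 := fun hne => by
    have hquad : x ^ 2 + x * y + y ^ 2 = 0 := by
      have : (x - y) * (x ^ 2 + x * y + y ^ 2) = 0 := by linear_combination hx3 - hy3
      exact (mul_eq_zero.mp this).resolve_left (sub_ne_zero.mpr hne.symm)
    linear_combination x * hquad - hx3 - h2
  constructor
  · intro hsum
    have hne : y ≠ x := by
      rintro rfl
      exact hz (by linear_combination hsum - y * h2)
    linear_combination (-(x * y)) * hsum + key hne + x * y * z * h2
  · intro hprod
    have hne : y ≠ x := by
      rintro rfl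
      exact hxyz ⟨rfl, by linear_combination y * hprod - z * hx3⟩
    have : x * y * (x + y + z) = 0 := by linear_combination key hne + hprod + h2
    exact (mul_eq_zero.mp this).resolve_left (mul_ne_zero hx hy)

open Finset in
lemma forall_ne_zero_or_eq_single (hK : Fintype.card K = 4) (hτ : ∀ x, τ x = x ^ 2)
    {v : Fin 3 → K} (hv : Psi τ v v ≠ 0) :
    (∀ i, v i ≠ 0) ∨ ∃ i a, a ≠ 0 ∧ v = Pi.single i a := by
  classical
  have hcount : Psi τ v v = (#{i | v i ≠ 0} : K) := by
    rw [Psi_self_eq_sum_pow τ hτ, Finset.natCast_card_filter]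
    refine Finset.sum_congr rfl fun i _ => ?_
    split_ifs with hi
    · exact pow_three_eq_one_of_card_eq_four hK hi
    · simp [not_not.mp hi]
  have hle : #{i | v i ≠ 0} ≤ 3 := (Finset.card_filter_le _ _).trans (by simp)
  rw [hcount] at hv
  interval_cases hcard : #{i | v i ≠ 0}
  · exact absurd Nat.cast_zero hv
  · obtain ⟨i, hi⟩ := Finset.card_eq_one.mp hcard
    have hsupp : ∀ j, v j ≠ 0 ↔ j = i := fun j => by
      simpa using congrArg (j ∈ ·) hi
    refine Or.inr ⟨i, v i, (hsupp i).mpr rfl, funext fun j => ?_⟩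
    by_cases hj : j = i
    · simp [hj]
    · simpa [Pi.single_apply, hj] using mt (hsupp j).mp hj
  · exact absurd (by exact_mod_cast two_eq_zero_of_card_eq_four hK) hv
  · have huniv := (Finset.card_eq_iff_eq_univ _).mp (hcard.trans (Fintype.card_fin 3).symm)
    refine Or.inl fun i => ?_
    have hi : i ∈ ({i | v i ≠ 0} : Finset (Fin 3)) := by rw [huniv]; exact Finset.mem_univ i
    simpa using hi

lemma prod_eq_of_span_singleton_eq (hK : Fintype.card K = 4) {v w : Fin 3 → K}
    (h : K ∙ v = K ∙ w) : ∏ i, v i = ∏ i, w i := by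
  obtain ⟨c, rfl⟩ := Submodule.span_singleton_eq_span_singleton.mp h
  have hc := pow_three_eq_one_of_card_eq_four hK c.ne_zero
  simp only [Fin.prod_univ_three, Units.smul_def, Pi.smul_apply, smul_eq_mul]
  linear_combination (-(v 0 * v 1 * v 2)) * hc

lemma Psi_eq_zero_iff_prod_eq_of_forall_ne_zero (hK : Fintype.card K = 4)
    (hτ : ∀ x, τ x = x ^ 2) {v w : Fin 3 → K} (hv : ∀ i, v i ≠ 0) (hw : ∀ i, w i ≠ 0)
    (hvw : K ∙ v ≠ K ∙ w) : Psi τ v w = 0 ↔ ∏ i, v i = ∏ i, w i := by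
  -- `v = x * w` coordinatewise, and `Ψ(v, w) = ∑ i, x i` because `w i ^ 3 = 1`
  set x : Fin 3 → K := fun i => v i * w i ^ 2
  have hvx : ∀ i, v i = x i * w i := fun i => by
    linear_combination (-(v i)) * pow_three_eq_one_of_card_eq_four hK (hw i)
  have hx : ∀ i, x i ≠ 0 := fun i => mul_ne_zero (hv i) (pow_ne_zero 2 (hw i))
  have hPsi : Psi τ v w = x 0 + x 1 + x 2 := by simp [Psi, hτ, Fin.sum_univ_three, x]
  have hprod : ∏ i, v i = ∏ i, w i ↔ x 0 * x 1 * x 2 = 1 := by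
    have hw_prod : w 0 * w 1 * w 2 ≠ 0 := by simp [hw]
    rw [Fin.prod_univ_three, Fin.prod_univ_three, hvx 0, hvx 1, hvx 2]
    constructor
    · intro h
      exact mul_right_cancel₀ hw_prod (by linear_combination h)
    · intro h
      linear_combination (w 0 * w 1 * w 2) * h
  have hx_nonconst : ¬ (x 1 = x 0 ∧ x 2 = x 0) := by
    rintro ⟨h1, h2⟩
    have hv_eq : v = x 0 • w := funext fun i => by fin_cases i <;> simp [hvx, h1, h2]
    exact hvw (hv_eq ▸ Submodule.span_singleton_smul_eq (IsUnit.mk0 _ (hx 0)) w)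
  rw [hPsi, hprod]
  exact add_add_eq_zero_iff_mul_mul_eq_one hK (hx 0) (hx 1) (hx 2) hx_nonconst

lemma Psi_eq_zero_iff_prod_eq (hK : Fintype.card K = 4) (hτ : ∀ x, τ x = x ^ 2)
    {v w : Fin 3 → K} (hv : Psi τ v v ≠ 0) (hw : Psi τ w w ≠ 0) (hvw : K ∙ v ≠ K ∙ w) :
    Psi τ v w = 0 ↔ ∏ i, v i = ∏ i, w i := by
  have prod_single : ∀ (j : Fin 3) (b : K), ∏ i, Pi.single j b i = 0 := fun j b => by
    fin_cases j <;> simp [Fin.prod_univ_three]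
  rcases forall_ne_zero_or_eq_single τ hK hτ hv with hv' | ⟨i, a, ha, rfl⟩ <;>
    rcases forall_ne_zero_or_eq_single τ hK hτ hw with hw' | ⟨j, b, hb, rfl⟩
  · exact Psi_eq_zero_iff_prod_eq_of_forall_ne_zero τ hK hτ hv' hw' hvw
  · rw [Psi_single_right, prod_single]
    simp [hτ, hv' j, hb, Finset.prod_ne_zero_iff.mpr fun i _ => hv' i]
  · rw [Psi_single_left, prod_single]
    simp [hτ, hw' i, ha, (Finset.prod_ne_zero_iff.mpr fun i _ => hw' i).symm]
  · have hij : i ≠ j := by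
      rintro rfl
      refine hvw (Submodule.span_singleton_eq_span_singleton.mpr
        ⟨Units.mk0 (b / a) (div_ne_zero hb ha), ?_⟩)
      ext k
      by_cases hk : k = i <;> simp [hk, ha]
    simp [Psi_single_left, hij, prod_single]

lemma frameGraph_adj_iff_prod_eq (hK : Fintype.card K = 4) (hτ : ∀ x, τ x = x ^ 2)
    (hτ2 : ∀ x, τ (τ x) = x) (S T : {S : Submodule K (Fin 3 → K) // IsVertex τ S}) :
    (FrameGraph τ hτ2 3).Adj S T ↔ S ≠ T ∧ ∏ i, vertexGen τ S i = ∏ i, vertexGen τ T i := by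
  rw [frameGraph_adj_iff]
  refine and_congr_right fun hST => Psi_eq_zero_iff_prod_eq τ hK hτ
    (Psi_vertexGen_self_ne_zero τ S) (Psi_vertexGen_self_ne_zero τ T) ?_
  rwa [span_vertexGen, span_vertexGen, Ne, ← Subtype.ext_iff]

lemma surjective_prod_vertexGen (hK : Fintype.card K = 4) (hτ : ∀ x, τ x = x ^ 2) :
    Function.Surjective fun S : {S : Submodule K (Fin 3 → K) // IsVertex τ S} =>
      ∏ i, vertexGen τ S i := by
  intro c
  obtain ⟨v, hv, rfl⟩ : ∃ v : Fin 3 → K, Psi τ v v ≠ 0 ∧ ∏ i, v i = c := by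
    by_cases hc : c = 0
    · exact ⟨Pi.single 0 1, by simp [Psi_single_left, hτ], by simp [hc, Fin.prod_univ_three]⟩
    · refine ⟨![c, 1, 1], ?_, by simp [Fin.prod_univ_three]⟩
      have h : Psi τ ![c, 1, 1] ![c, 1, 1] = 1 := by
        rw [Psi_self_eq_sum_pow τ hτ, Fin.sum_univ_three]
        simp only [Matrix.cons_val_zero, Matrix.cons_val_one, Matrix.cons_val_two,
          Matrix.head_cons, Matrix.tail_cons, one_pow]
        linear_combination pow_three_eq_one_of_card_eq_four hK hc +
          two_eq_zero_of_card_eq_four hK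
      rw [h]; exact one_ne_zero
  exact ⟨⟨K ∙ v, isVertex_span_singleton τ hv⟩,
    prod_eq_of_span_singleton_eq hK (span_vertexGen τ _)⟩

end FourElementField

/-- For `q = 2` (so `K` has exactly `4` elements) and `n = 3`, the graph
`G(V)` has exactly `4` connected components. -/
theorem statement8 [Fintype K] (hK : Fintype.card K = 2 ^ 2)
    (τ : K →+* K) (hτq : ∀ x, τ x = x ^ 2) :
    Nat.card ((FrameGraph τ (tau_invol hK τ hτq) 3).ConnectedComponent) = 4 := by
  have hK4 : Fintype.card K = 4 := hK
  rw [SimpleGraph.natCard_connectedComponent_eq_of_adj_iff _ _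
    (surjective_prod_vertexGen τ hK4 hτq) (frameGraph_adj_iff_prod_eq τ hK4 hτq _),
    Nat.card_eq_fintype_card, hK4]

end FramePaper
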